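/- arXiv:2402.15649 — 3 statements merged into one kernel-verified Lean document; each statement's English description precedes it below -/
import Mathlib

section
/- Let f be a polynomial in n variables of degree at most D and ℓ ∈ ℕ. For any vectors v₁,…,v_ℓ ∈ ℝⁿ, the iterated directional derivative satisfies ‖(1/ℓ!)·∂^ℓ f[v₁,…,v_ℓ]‖₁ ≤ binomial(D, ℓ)·‖f‖₁·‖v₁‖_∞ ⋯ ‖v_ℓ‖_∞. -/
open MvPolynomial

/-- The 1-norm of a real multivariate polynomial: the sum of the absolute
values of its coefficients. -/
noncomputable def norm1 {n : ℕ} (f : MvPolynomial (Fin n) ℝ) : ℝ :=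
  ∑ α ∈ f.support, |f.coeff α|

/-- The directional derivative `∂f[v] = Σₖ (∂f/∂Xₖ)·vₖ`. -/
noncomputable def dirDeriv {n : ℕ} (v : Fin n → ℝ) (f : MvPolynomial (Fin n) ℝ) :
    MvPolynomial (Fin n) ℝ :=
  ∑ k, MvPolynomial.C (v k) * MvPolynomial.pderiv k f

/-- The iterated directional derivative `∂^ℓ f[v₁,…,v_ℓ]`, applying the
directional derivatives successively. -/
noncomputable def itDeriv {n : ℕ} :
    MvPolynomial (Fin n) ℝ → List (Fin n → ℝ) → MvPolynomial (Fin n) ℝ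
  | f, [] => f
  | f, v :: vs => itDeriv (dirDeriv v f) vs

/-! Differentiating `X^m` in direction `v` yields `∑ₖ vₖ mₖ X^(m - eₖ)`, whose coefficients have
absolute values summing to at most `|m|·‖v‖_∞ ≤ D‖v‖_∞`; so each directional derivative scales the
1-norm by at most `D‖v‖_∞` and lowers the degree by one. Iterating `ℓ` times gives the falling
factorial `D(D-1)⋯(D-ℓ+1) = ℓ!·binom(D,ℓ)`. -/

section PDeriv

variable {R σ : Type*} [CommSemiring R]

lemma pderiv_eq_sum_monomial (i : σ) (p : MvPolynomial σ R) :
    pderiv i p = ∑ m ∈ p.support, monomial (m - Finsupp.single i 1) (p.coeff m * m i) := by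
  conv_lhs => rw [p.as_sum]
  simp only [map_sum, pderiv_monomial]

lemma totalDegree_pderiv_le (i : σ) (p : MvPolynomial σ R) :
    (pderiv i p).totalDegree ≤ p.totalDegree - 1 := by
  refine Finset.sup_le fun m hm => ?_
  have hcoeff : p.coeff (m + Finsupp.single i 1) ≠ 0 := by
    rw [mem_support_iff, coeff_pderiv] at hm
    exact left_ne_zero_of_mul hm
  have := le_totalDegree (mem_support_iff.mpr hcoeff)
  rw [Finsupp.sum_add_index' (fun _ => rfl) (fun _ _ _ => rfl),
    Finsupp.sum_single_index rfl] at this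
  omega

end PDeriv

section Norm1

variable {n : ℕ}

lemma norm1_nonneg (f : MvPolynomial (Fin n) ℝ) : 0 ≤ norm1 f :=
  Finset.sum_nonneg fun _ _ => abs_nonneg _

lemma norm1_eq_sum_of_support_subset (f : MvPolynomial (Fin n) ℝ) {s : Finset (Fin n →₀ ℕ)}
    (hs : f.support ⊆ s) : norm1 f = ∑ α ∈ s, |f.coeff α| :=
  Finset.sum_subset hs fun α _ hα => by simp [notMem_support_iff.mp hα]

lemma norm1_add_le (f g : MvPolynomial (Fin n) ℝ) : norm1 (f + g) ≤ norm1 f + norm1 g := by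
  classical
  rw [norm1_eq_sum_of_support_subset (f + g) support_add,
    norm1_eq_sum_of_support_subset f Finset.subset_union_left,
    norm1_eq_sum_of_support_subset g Finset.subset_union_right, ← Finset.sum_add_distrib]
  exact Finset.sum_le_sum fun α _ => by simpa using abs_add_le (f.coeff α) (g.coeff α)

lemma norm1_sum_le {ι : Type*} (s : Finset ι) (f : ι → MvPolynomial (Fin n) ℝ) :
    norm1 (∑ i ∈ s, f i) ≤ ∑ i ∈ s, norm1 (f i) :=
  Finset.le_sum_of_subadditive norm1 (by simp [norm1]) norm1_add_le s f

lemma norm1_smul (c : ℝ) (f : MvPolynomial (Fin n) ℝ) : norm1 (c • f) = |c| * norm1 f := by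
  rw [norm1_eq_sum_of_support_subset (c • f) support_smul, norm1, Finset.mul_sum]
  simp [abs_mul]

lemma norm1_monomial (m : Fin n →₀ ℕ) (a : ℝ) : norm1 (monomial m a) = |a| := by
  classical
  by_cases ha : a = 0
  · simp [ha, norm1]
  · simp [norm1, support_monomial, ha]

lemma norm1_pderiv_le (k : Fin n) (f : MvPolynomial (Fin n) ℝ) :
    norm1 (pderiv k f) ≤ ∑ m ∈ f.support, |f.coeff m| * m k := by
  rw [pderiv_eq_sum_monomial]
  refine (norm1_sum_le _ _).trans_eq (Finset.sum_congr rfl fun m _ => ?_)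
  rw [norm1_monomial, abs_mul, Nat.abs_cast]

lemma sum_abs_coeff_mul_degree_le (f : MvPolynomial (Fin n) ℝ) :
    ∑ m ∈ f.support, |f.coeff m| * ∑ k, (m k : ℝ) ≤ f.totalDegree * norm1 f := by
  rw [norm1, Finset.mul_sum]
  refine Finset.sum_le_sum fun m hm => ?_
  have hdeg : ∑ k, m k ≤ f.totalDegree := by
    simpa [Finsupp.sum_fintype] using le_totalDegree hm
  rw [mul_comm]
  gcongr
  exact_mod_cast hdeg

lemma totalDegree_dirDeriv_le (v : Fin n → ℝ) (f : MvPolynomial (Fin n) ℝ) :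
    (dirDeriv v f).totalDegree ≤ f.totalDegree - 1 :=
  totalDegree_finsetSum_le fun k _ => by
    rw [← smul_eq_C_mul]
    exact (totalDegree_smul_le _ _).trans (totalDegree_pderiv_le k f)

lemma norm1_dirDeriv_le (v : Fin n → ℝ) (f : MvPolynomial (Fin n) ℝ) :
    norm1 (dirDeriv v f) ≤ f.totalDegree * norm1 f * ‖v‖ :=
  calc norm1 (dirDeriv v f)
      ≤ ∑ k, |v k| * norm1 (pderiv k f) := by
        refine (norm1_sum_le _ _).trans_eq (Finset.sum_congr rfl fun k _ => ?_)
        rw [← smul_eq_C_mul, norm1_smul]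
    _ ≤ ∑ k, ‖v‖ * ∑ m ∈ f.support, |f.coeff m| * m k := by
        gcongr with k
        · exact Finset.sum_nonneg fun _ _ => by positivity
        · exact norm_le_pi_norm v k
        · exact norm1_pderiv_le k f
    _ = ‖v‖ * ∑ m ∈ f.support, |f.coeff m| * ∑ k, (m k : ℝ) := by
        simp_rw [Finset.mul_sum]
        rw [Finset.sum_comm]
    _ ≤ f.totalDegree * norm1 f * ‖v‖ := by
        rw [mul_comm]
        gcongr
        exact sum_abs_coeff_mul_degree_le f

lemma norm1_itDeriv_le_descFactorial (vs : List (Fin n → ℝ)) (D : ℕ)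
    (f : MvPolynomial (Fin n) ℝ) (hD : f.totalDegree ≤ D) :
    norm1 (itDeriv f vs) ≤ D.descFactorial vs.length * norm1 f * (vs.map fun v => ‖v‖).prod := by
  induction vs generalizing D f with
  | nil => simp [itDeriv]
  | cons v vs ih =>
    have hprod : 0 ≤ (vs.map fun v => ‖v‖).prod := List.prod_nonneg (by simp)
    have hf := norm1_nonneg f
    have hfirst : norm1 (dirDeriv v f) ≤ D * norm1 f * ‖v‖ :=
      (norm1_dirDeriv_le v f).trans (by gcongr)
    have hdesc : (D.descFactorial (vs.length + 1) : ℝ) = D * (D - 1).descFactorial vs.length := by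
      cases D with
      | zero => simp
      | succ D => rw [Nat.succ_descFactorial_succ]; push_cast; simp
    calc norm1 (itDeriv f (v :: vs))
        ≤ (D - 1).descFactorial vs.length * norm1 (dirDeriv v f) * (vs.map fun v => ‖v‖).prod :=
          ih (D - 1) (dirDeriv v f) ((totalDegree_dirDeriv_le v f).trans (by omega))
      _ ≤ (D - 1).descFactorial vs.length * (D * norm1 f * ‖v‖) * (vs.map fun v => ‖v‖).prod := by
          gcongr
      _ = D.descFactorial (v :: vs).length * norm1 f * ((v :: vs).map fun v => ‖v‖).prod := by
          rw [List.length_cons, hdesc, List.map_cons, List.prod_cons]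
          ring

end Norm1

/-- If `f` has degree at most `D`, then
`‖(1/ℓ!)·∂^ℓ f[v₁,…,v_ℓ]‖₁ ≤ binom(D,ℓ)·‖f‖₁·‖v₁‖_∞⋯‖v_ℓ‖_∞`. -/
theorem norm1_itDeriv_le {n : ℕ} (D ℓ : ℕ) (f : MvPolynomial (Fin n) ℝ)
    (hD : f.totalDegree ≤ D) (vs : List (Fin n → ℝ)) (hlen : vs.length = ℓ) :
    norm1 ((ℓ.factorial : ℝ)⁻¹ • itDeriv f vs) ≤
      (D.choose ℓ : ℝ) * norm1 f * (vs.map fun v => ‖v‖).prod := by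
  have hdesc : (D.descFactorial ℓ : ℝ) = ℓ.factorial * D.choose ℓ := by
    exact_mod_cast Nat.descFactorial_eq_factorial_mul_choose D ℓ
  rw [norm1_smul, abs_of_pos (by positivity)]
  calc (ℓ.factorial : ℝ)⁻¹ * norm1 (itDeriv f vs)
      ≤ (ℓ.factorial : ℝ)⁻¹ * (D.descFactorial ℓ * norm1 f * (vs.map fun v => ‖v‖).prod) := by
        gcongr
        simpa [hlen] using norm1_itDeriv_le_descFactorial vs D f hD
    _ = D.choose ℓ * norm1 f * (vs.map fun v => ‖v‖).prod := by
        rw [hdesc]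
        field_simp
end

section
/- Let A, B ∈ ℝ^{q×n} with B surjective (as a linear map ℝⁿ → ℝ^q), and suppose ‖B†(A−B)‖ < 1 in operator norm, where B† = B*(BB*)^{-1} is the Moore–Penrose pseudoinverse. Then A is surjective and ‖A†B‖ ≤ 1/(1 − ‖B†(A−B)‖). -/
open Matrix

/-- Euclidean norm of a vector. -/
noncomputable def euclNorm {m : ℕ} (v : Fin m → ℝ) : ℝ :=
  Real.sqrt (∑ i, v i ^ 2)

/-- The spectral (operator 2-)norm of a matrix. -/
noncomputable def opNorm2 {a b : ℕ} (M : Matrix (Fin a) (Fin b) ℝ) : ℝ :=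
  sSup {r | ∃ v : Fin b → ℝ, euclNorm v ≤ 1 ∧ r = euclNorm (M.mulVec v)}

/-- The Moore–Penrose pseudoinverse `M† = M*(MM*)⁻¹` of a surjective matrix. -/
noncomputable def pinv {q n : ℕ} (M : Matrix (Fin q) (Fin n) ℝ) :
    Matrix (Fin n) (Fin q) ℝ :=
  Mᵀ * (M * Mᵀ)⁻¹

/-!
With `E = B†(A − B)`, the identity `BB† = I` gives `A = B(I + E)`. Since `‖E‖ < 1`, the Neumann
series `C = ∑ (−E)ᵏ` inverts `I + E` with `‖C‖ ≤ 1/(1 − ‖E‖)`, so `B = AC` and `A` is surjective.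
Finally `A†B = (A†A)C`, and `A†A` is an orthogonal projection, of norm at most `1`.
-/

open scoped Matrix.Norms.L2Operator

/-- The hypothesis `‖1‖ ≤ 1` replaces `NormOneClass`, which fails for `0 × 0` matrices. -/
theorem Units.norm_inv_oneSub_le {R : Type*} [NormedRing R] [HasSummableGeomSeries R]
    (h1 : ‖(1 : R)‖ ≤ 1) (t : R) (ht : ‖t‖ < 1) :
    ‖(↑(Units.oneSub t ht)⁻¹ : R)‖ ≤ (1 - ‖t‖)⁻¹ := by
  have := tsum_geometric_le_of_norm_lt_one t ht
  simp only [Units.oneSub, Units.inv_mk]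
  linarith

theorem Matrix.isUnit_mul_transpose_of_surjective {m n K : Type*} [Fintype m] [Fintype n]
    [DecidableEq m] [Field K] [LinearOrder K] [IsStrictOrderedRing K] {M : Matrix m n K}
    (h : Function.Surjective M.mulVec) : IsUnit (M * Mᵀ) := by
  obtain ⟨R, hR⟩ := mulVec_surjective_iff_exists_right_inverse.1 h
  have hMT : Function.Injective Mᵀ.mulVec := Function.LeftInverse.injective (g := Rᵀ.mulVec)
    fun x ↦ by rw [mulVec_mulVec, ← transpose_mul, hR, transpose_one, one_mulVec]
  have hker := ker_mulVecLin_transpose_mul_self Mᵀ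
  rw [transpose_transpose] at hker
  rwa [← mulVec_injective_iff_isUnit, ← coe_mulVecLin, ← LinearMap.ker_eq_bot, hker,
    LinearMap.ker_eq_bot, coe_mulVecLin]

theorem euclNorm_eq_norm {m : ℕ} (v : Fin m → ℝ) : euclNorm v = ‖WithLp.toLp 2 v‖ := by
  simp [euclNorm, EuclideanSpace.norm_eq]

theorem opNorm2_eq_norm {a b : ℕ} (M : Matrix (Fin a) (Fin b) ℝ) : opNorm2 M = ‖M‖ := by
  rw [l2_opNorm_def, ← ContinuousLinearMap.sSup_unitClosedBall_eq_norm, opNorm2]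
  congr 1
  ext r
  simp only [Set.mem_ofPred_eq, Set.mem_image, Metric.mem_closedBall, dist_zero_right,
    euclNorm_eq_norm, LinearEquiv.trans_apply, LinearMap.coe_toContinuousLinearMap']
  constructor
  · rintro ⟨v, hv, rfl⟩
    exact ⟨WithLp.toLp 2 v, hv, rfl⟩
  · rintro ⟨x, hx, rfl⟩
    exact ⟨x.ofLp, hx, rfl⟩

section Pinv

variable {q n : ℕ} {M : Matrix (Fin q) (Fin n) ℝ}

theorem mul_pinv (h : Function.Surjective M.mulVec) : M * pinv M = 1 := by
  rw [pinv, ← Matrix.mul_assoc]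
  exact mul_nonsing_inv _ ((isUnit_iff_isUnit_det _).1 (isUnit_mul_transpose_of_surjective h))

theorem isStarProjection_pinv_mul (h : Function.Surjective M.mulVec) :
    IsStarProjection (pinv M * M) where
  isIdempotentElem := by
    rw [IsIdempotentElem, Matrix.mul_assoc, ← Matrix.mul_assoc M, mul_pinv h, Matrix.one_mul]
  isSelfAdjoint := by
    rw [IsSelfAdjoint, star_eq_conjTranspose, conjTranspose_eq_transpose_of_trivial, pinv,
      transpose_mul, transpose_mul, transpose_transpose, transpose_nonsing_inv, transpose_mul,
      transpose_transpose, Matrix.mul_assoc]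

theorem mul_one_add_pinv_mul_sub (A : Matrix (Fin q) (Fin n) ℝ)
    (h : Function.Surjective M.mulVec) : M * (1 + pinv M * (A - M)) = A := by
  rw [Matrix.mul_add, Matrix.mul_one, ← Matrix.mul_assoc, mul_pinv h, Matrix.one_mul,
    add_sub_cancel]

end Pinv

/-- If `B` is surjective and `‖B†(A−B)‖ < 1`, then `A` is surjective and
`‖A†B‖ ≤ 1/(1 − ‖B†(A−B)‖)`. -/
theorem surjective_and_pinv_bound {q n : ℕ} (A B : Matrix (Fin q) (Fin n) ℝ)
    (hB : Function.Surjective B.mulVec)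
    (hlt : opNorm2 (pinv B * (A - B)) < 1) :
    Function.Surjective A.mulVec ∧
      opNorm2 (pinv A * B) ≤ 1 / (1 - opNorm2 (pinv B * (A - B))) := by
  simp only [opNorm2_eq_norm] at hlt ⊢
  set E := pinv B * (A - B)
  have hE : ‖-E‖ < 1 := by rwa [norm_neg]
  set C : Matrix (Fin n) (Fin n) ℝ := ↑(Units.oneSub (-E) hE)⁻¹
  have hAC : A * C = B := by
    rw [← mul_one_add_pinv_mul_sub A hB, Matrix.mul_assoc, ← sub_neg_eq_add,
      ← Units.val_oneSub (-E) hE, Units.mul_inv, Matrix.mul_one]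
  have hA : Function.Surjective A.mulVec := fun y ↦
    let ⟨x, hx⟩ := hB y
    ⟨C *ᵥ x, by rw [mulVec_mulVec, hAC, hx]⟩
  refine ⟨hA, ?_⟩
  rw [← hAC, ← Matrix.mul_assoc, one_div]
  calc ‖pinv A * A * C‖ ≤ ‖pinv A * A‖ * ‖C‖ := norm_mul_le _ _
    _ ≤ 1 * (1 - ‖-E‖)⁻¹ := by
      gcongr
      · exact (isStarProjection_pinv_mul hA).norm_le
      · exact Units.norm_inv_oneSub_le (IsStarProjection.one _).norm_le _ hE
    _ = (1 - ‖E‖)⁻¹ := by rw [one_mul, norm_neg]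
end

section
/- Let x, y ∈ ℝⁿ and write ‖x‖_{h∞} := max{1, ‖x‖_∞}. Then ‖ (1, y)/‖y‖_{h∞} − (1, x)/‖x‖_{h∞} ‖_∞ ≤ 2‖y − x‖_∞ / ‖x‖_{h∞}, where (1, x) ∈ ℝ^{n+1} denotes the homogenization of x. -/
/-!
With `a = max 1 ‖x‖` and `b = max 1 ‖y‖`, split
`b⁻¹ (1, y) - a⁻¹ (1, x) = a⁻¹ ((1, y) - (1, x)) + (b⁻¹ - a⁻¹) (1, y)`.
The first term has norm `‖y - x‖ / a`. Since `‖(1, y)‖ = b`, the second has norm `|a - b| / a`,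
and `|a - b| ≤ ‖y - x‖` because `t ↦ max 1 t` is 1-Lipschitz.
-/

theorem Fin.nnnorm_cons {E : Type*} [SeminormedAddGroup E] {n : ℕ} (a : E) (v : Fin n → E) :
    ‖(Fin.cons a v : Fin (n + 1) → E)‖₊ = max ‖a‖₊ ‖v‖₊ := by
  simp [Pi.nnnorm_def, Fin.univ_succ, Finset.sup_map, Function.comp_def]

theorem Fin.norm_cons {E : Type*} [SeminormedAddGroup E] {n : ℕ} (a : E) (v : Fin n → E) :
    ‖(Fin.cons a v : Fin (n + 1) → E)‖ = max ‖a‖ ‖v‖ := by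
  simpa using congrArg ((↑) : NNReal → ℝ) (Fin.nnnorm_cons a v)

theorem norm_inv_smul_sub_inv_smul_le {E : Type*} [SeminormedAddCommGroup E] [NormedSpace ℝ E]
    {a b : ℝ} (ha : 0 < a) (hb : 0 < b) {u v : E} (hv : ‖v‖ ≤ b) :
    ‖b⁻¹ • v - a⁻¹ • u‖ ≤ (‖v - u‖ + |a - b|) / a := by
  have hsplit : b⁻¹ • v - a⁻¹ • u = a⁻¹ • (v - u) + (b⁻¹ - a⁻¹) • v := by module
  have hcoef : |b⁻¹ - a⁻¹| * b = |a - b| / a := by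
    rw [inv_sub_inv hb.ne' ha.ne', abs_div, abs_of_pos (mul_pos hb ha)]
    field_simp
  calc ‖b⁻¹ • v - a⁻¹ • u‖ ≤ a⁻¹ * ‖v - u‖ + |b⁻¹ - a⁻¹| * ‖v‖ := by
        rw [hsplit]
        refine (norm_add_le _ _).trans_eq ?_
        rw [norm_smul, norm_smul, Real.norm_of_nonneg (inv_nonneg.2 ha.le), Real.norm_eq_abs]
    _ ≤ a⁻¹ * ‖v - u‖ + |b⁻¹ - a⁻¹| * b := by gcongr
    _ = (‖v - u‖ + |a - b|) / a := by rw [hcoef]; ring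

theorem abs_max_one_norm_sub_max_one_norm_le {E : Type*} [SeminormedAddCommGroup E] (x y : E) :
    |max 1 ‖x‖ - max 1 ‖y‖| ≤ ‖y - x‖ := by
  rw [max_comm 1, max_comm 1, norm_sub_rev]
  exact (abs_max_sub_max_le_abs _ _ _).trans (abs_norm_sub_norm_le x y)

/-- For `x, y ∈ ℝⁿ` with `‖x‖_{h∞} = max{1, ‖x‖_∞}`, the normalized
homogenizations satisfy
`‖(1,y)/‖y‖_{h∞} − (1,x)/‖x‖_{h∞}‖_∞ ≤ 2‖y−x‖_∞/‖x‖_{h∞}`.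
The norm on `Fin k → ℝ` is the sup-norm. -/
theorem homogenization_lipschitz {n : ℕ} (x y : Fin n → ℝ) :
    ‖(max 1 ‖y‖)⁻¹ • (Fin.cons 1 y : Fin (n + 1) → ℝ) -
        (max 1 ‖x‖)⁻¹ • (Fin.cons 1 x : Fin (n + 1) → ℝ)‖ ≤
      2 * ‖y - x‖ / max 1 ‖x‖ := by
  have hpos (z : Fin n → ℝ) : 0 < max 1 ‖z‖ := lt_max_of_lt_left one_pos
  have hcons_sub : (Fin.cons 1 y : Fin (n + 1) → ℝ) - Fin.cons 1 x = Fin.cons 0 (y - x) :=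
    (Matrix.cons_sub_cons (1 : ℝ) y 1 x).trans (by rw [sub_self]; rfl)
  calc _ ≤ (‖y - x‖ + |max 1 ‖x‖ - max 1 ‖y‖|) / max 1 ‖x‖ := by
        refine (norm_inv_smul_sub_inv_smul_le (hpos x) (hpos y) ?_).trans_eq ?_
        · simp [Fin.norm_cons]
        · simp [hcons_sub, Fin.norm_cons]
    _ ≤ 2 * ‖y - x‖ / max 1 ‖x‖ := by
        gcongr
        linarith [abs_max_one_norm_sub_max_one_norm_le x y]
end
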